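/- arXiv:1405.4718 — 6 statements merged into one kernel-verified Lean document; each statement's English description precedes it below -/
import Mathlib

section
/- Let λ, μ be weakly decreasing nonnegative integer vectors with λ_i ≥ μ_i for all i, and let 1 = (1,…,1) be the weight with |λ|−|μ| entries. Then every point of the Gelfand–Tsetlin polytope P_{λ/μ,1} all of whose entries are integers is an extreme point of P_{λ/μ,1}. -/
open Finset

/-- A real `(m+1) × n` array satisfying the Gelfand–Tsetlin inequalities:
rows increase upwards along columns, and down-right diagonals decrease.
Row `0` is the bottom row, row `m` the top row. -/
def IsGTPattern (m n : ℕ) (x : Fin (m + 1) → Fin n → ℝ) : Prop :=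
  (∀ (i : Fin m) (j : Fin n), x i.castSucc j ≤ x i.succ j) ∧
  (∀ (i : Fin m) (j : Fin n) (h : (j : ℕ) + 1 < n),
    x i.succ ⟨(j : ℕ) + 1, h⟩ ≤ x i.castSucc j)

/-- The Gelfand–Tsetlin polytope `P_{λ/μ,w}`: row `0` is `μ`, row `m` is `λ`,
and the weight vector `w` has `m` entries, prescribing the successive
differences of row sums. -/
def gtPolytope (m n : ℕ) (lam mu : Fin n → ℤ) (w : Fin m → ℤ) :
    Set (Fin (m + 1) → Fin n → ℝ) :=
  {x | IsGTPattern m n x ∧ (∀ j, x 0 j = (mu j : ℝ)) ∧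
    (∀ j, x (Fin.last m) j = (lam j : ℝ)) ∧
    ∀ i : Fin m, (∑ j, x i.succ j) - (∑ j, x i.castSucc j) = (w i : ℝ)}

/-! The difference of two consecutive rows of a point of `P_{λ/μ,1}` lies in the standard
simplex, and an integral point of the simplex is one of its vertices. The row differences
together with the fixed bottom row `μ` determine the point, so if an integral point lies inside
a segment of the polytope, both endpoints have its row differences and hence coincide with it. -/

open Set

theorem mem_extremePoints_of_injOn_of_mapsTo {𝕜 E F : Type*} [Semiring 𝕜] [PartialOrder 𝕜]
    [AddCommMonoid E] [Module 𝕜 E] [AddCommMonoid F] [Module 𝕜 F] (f : E →ₗ[𝕜] F)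
    {A : Set E} {B : Set F} {x : E} (hf : InjOn f A) (hAB : MapsTo f A B) (hx : x ∈ A)
    (hfx : f x ∈ B.extremePoints 𝕜) :
    x ∈ A.extremePoints 𝕜 := by
  refine ⟨hx, fun y hy z hz ⟨a, b, ha, hb, hab, hxyz⟩ => hf hy hx ?_⟩
  exact hfx.2 (hAB hy) (hAB hz) ⟨a, b, ha, hb, hab, by simp [← hxyz]⟩

theorem mem_extremePoints_stdSimplex_of_forall_int {𝕜 ι : Type*} [Ring 𝕜] [LinearOrder 𝕜]
    [IsStrictOrderedRing 𝕜] [Fintype ι] {f : ι → 𝕜} (hf : f ∈ stdSimplex 𝕜 ι)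
    (hint : ∀ i, ∃ z : ℤ, f i = z) : f ∈ (stdSimplex 𝕜 ι).extremePoints 𝕜 := by
  refine ⟨hf, fun g hg h hh ⟨a, b, ha, hb, _, hfgh⟩ => ?_⟩
  -- `g ≤ f` with equal sums: where `f i = 0` positivity forces `g i = 0`, elsewhere `f i ≥ 1`.
  have hle : ∀ i, g i ≤ f i := by
    intro i
    have hfi : a * g i + b * h i = f i := by simpa using congrFun hfgh i
    rcases eq_or_ne (f i) 0 with h0 | h0
    · rw [h0] at hfi
      have : a * g i = 0 :=
        ((add_eq_zero_iff_of_nonneg (mul_nonneg ha.le (hg.1 i)) (mul_nonneg hb.le (hh.1 i))).1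
          hfi).1
      simp [h0, (mul_eq_zero.1 this).resolve_left ha.ne']
    · obtain ⟨z, hz⟩ := hint i
      have hz0 : 0 < z := Int.cast_pos.1 (hz ▸ lt_of_le_of_ne (hf.1 i) h0.symm)
      calc g i ≤ ∑ j, g j := single_le_sum (fun j _ => hg.1 j) (mem_univ i)
        _ = 1 := hg.2
        _ ≤ f i := by rw [hz]; exact_mod_cast hz0
  funext i
  exact ((sum_eq_sum_iff_of_le fun j _ => hle j).1 (hg.2.trans hf.2.symm) i (mem_univ i))

def rowDiff (R : Type*) {M : Type*} [Semiring R] [AddCommGroup M] [Module R M] (m : ℕ) :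
    (Fin (m + 1) → M) →ₗ[R] Fin m → M :=
  LinearMap.pi fun i =>
    LinearMap.proj (R := R) (φ := fun _ => M) i.succ - LinearMap.proj i.castSucc

section RowDiff

variable {R M : Type*} [Semiring R] [AddCommGroup M] [Module R M] {m : ℕ}

@[simp]
theorem rowDiff_apply (x : Fin (m + 1) → M) (i : Fin m) :
    rowDiff R m x i = x i.succ - x i.castSucc :=
  rfl

theorem eq_of_rowDiff_eq {x y : Fin (m + 1) → M} (h0 : x 0 = y 0)
    (h : rowDiff R m x = rowDiff R m y) : x = y := by
  funext i
  induction i using Fin.induction with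
  | zero => exact h0
  | succ i ih =>
    have hi := congrFun h i
    rw [rowDiff_apply, rowDiff_apply, ih] at hi
    exact sub_left_inj.1 hi

end RowDiff

section GTPolytope

variable {m n : ℕ} {lam mu : Fin n → ℤ}

theorem injOn_rowDiff_gtPolytope (w : Fin m → ℤ) :
    InjOn (rowDiff ℝ m) (gtPolytope m n lam mu w) := fun _ hx _ hy h =>
  eq_of_rowDiff_eq (funext fun j => (hx.2.1 j).trans (hy.2.1 j).symm) h

theorem rowDiff_mem_stdSimplex {x : Fin (m + 1) → Fin n → ℝ}
    (hx : x ∈ gtPolytope m n lam mu fun _ => 1) (i : Fin m) :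
    rowDiff ℝ m x i ∈ stdSimplex ℝ (Fin n) := by
  refine ⟨fun j => sub_nonneg.2 (hx.1.1 i j), ?_⟩
  simpa [sum_sub_distrib] using hx.2.2.2 i

end GTPolytope

theorem statement0_general (n : ℕ) (lam mu : Fin n → ℤ)
    (N : ℕ)
    (x : Fin (N + 1) → Fin n → ℝ)
    (hx : x ∈ gtPolytope N n lam mu fun _ => 1)
    (hint : ∀ i j, ∃ z : ℤ, x i j = z) :
    x ∈ Set.extremePoints ℝ (gtPolytope N n lam mu fun _ => 1) := by
  refine mem_extremePoints_of_injOn_of_mapsTo (rowDiff ℝ N) (injOn_rowDiff_gtPolytope _)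
    (B := univ.pi fun _ => stdSimplex ℝ (Fin n))
    (fun y hy => mem_univ_pi.2 (rowDiff_mem_stdSimplex hy)) hx ?_
  rw [extremePoints_pi]
  refine fun i _ => mem_extremePoints_stdSimplex_of_forall_int (rowDiff_mem_stdSimplex hx i)
    fun j => ?_
  obtain ⟨a, ha⟩ := hint i.succ j
  obtain ⟨b, hb⟩ := hint i.castSucc j
  exact ⟨a - b, by simp [ha, hb]⟩

/-- Every integral point of `P_{λ/μ,1}` (weight `(1,…,1)` with `|λ|-|μ|` entries)
is an extreme point of `P_{λ/μ,1}`. -/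
theorem statement0 (n : ℕ) (hn : 1 ≤ n) (lam mu : Fin n → ℤ)
    (hlam : Antitone lam) (hmu : Antitone mu)
    (hmu0 : ∀ j, 0 ≤ mu j) (hge : ∀ j, mu j ≤ lam j)
    (N : ℕ) (hN : (N : ℤ) = ∑ j, lam j - ∑ j, mu j)
    (x : Fin (N + 1) → Fin n → ℝ)
    (hx : x ∈ gtPolytope N n lam mu fun _ => 1)
    (hint : ∀ i j, ∃ z : ℤ, x i j = z) :
    x ∈ Set.extremePoints ℝ (gtPolytope N n lam mu fun _ => 1) :=
  statement0_general n lam mu N x hx hint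
end

section
/- Let λ = (h,1,1,…,1) ∈ ℤ^l be a hook partition (h ≥ 1, l ≥ 1), let μ = (0,…,0), and let w = (w_1,…,w_{m−1}) be any nonnegative integer vector with w_1+…+w_{m−1} = h+l−1. Then every point of the Gelfand–Tsetlin polytope P_{λ/μ,w} all of whose entries are integers is an extreme point of P_{λ/μ,w}. -/
/-!
Every column of a Gelfand–Tsetlin pattern is monotone, so for `λ = (h,1,…,1)` and `μ = 0` all
entries outside the first column lie in `[0,1]`; an integral pattern has them at the endpoints
`0` or `1`, which cannot be split inside the polytope. The weight fixes every row sum, so the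
first column is determined by the others.
-/

open Finset

lemma IsGTPattern.monotone_col {m n : ℕ} {x : Fin (m + 1) → Fin n → ℝ} (hx : IsGTPattern m n x)
    (j : Fin n) : Monotone fun i => x i j :=
  Fin.monotone_iff_le_succ.2 fun i => hx.1 i j

section gtPolytope

variable {m n : ℕ} {lam mu : Fin n → ℤ} {w : Fin m → ℤ} {x y : Fin (m + 1) → Fin n → ℝ}

lemma mem_Icc_of_mem_gtPolytope (hx : x ∈ gtPolytope m n lam mu w) (i : Fin (m + 1))
    (j : Fin n) : x i j ∈ Set.Icc (mu j : ℝ) (lam j) := by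
  obtain ⟨hgt, hbot, htop, -⟩ := hx
  exact ⟨hbot j ▸ hgt.monotone_col j (Fin.zero_le i), htop j ▸ hgt.monotone_col j (Fin.le_last i)⟩

lemma sum_row_eq_of_mem_gtPolytope (hx : x ∈ gtPolytope m n lam mu w)
    (hy : y ∈ gtPolytope m n lam mu w) (i : Fin (m + 1)) : ∑ j, x i j = ∑ j, y i j := by
  induction i using Fin.induction with
  | zero => simp [hx.2.1, hy.2.1]
  | succ i ih => linarith [hx.2.2.2 i, hy.2.2.2 i]

lemma eq_of_mem_gtPolytope_of_forall_ne_zero (hx : x ∈ gtPolytope m n lam mu w)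
    (hy : y ∈ gtPolytope m n lam mu w) (h : ∀ i (j : Fin n), (j : ℕ) ≠ 0 → x i j = y i j) :
    x = y := by
  funext i j
  by_cases hj : (j : ℕ) = 0
  · have hrest : ∑ k ∈ univ.erase j, x i k = ∑ k ∈ univ.erase j, y i k :=
      sum_congr rfl fun k hk => h i k fun hk0 => ne_of_mem_erase hk (Fin.ext (hk0.trans hj.symm))
    have hrow := sum_row_eq_of_mem_gtPolytope hx hy i
    rw [← add_sum_erase _ _ (mem_univ j), ← add_sum_erase _ _ (mem_univ j), hrest] at hrow
    linarith
  · exact h i j hj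

end gtPolytope

lemma intCast_mem_extremePoints_Icc_zero_one {t : ℤ} (ht : (t : ℝ) ∈ Set.Icc 0 1) :
    (t : ℝ) ∈ Set.extremePoints ℝ (Set.Icc 0 1) := by
  rw [Set.extremePoints_Icc zero_le_one]
  have ht' : 0 ≤ t ∧ t ≤ 1 := by exact_mod_cast Set.mem_Icc.1 ht
  obtain rfl | rfl : t = 0 ∨ t = 1 := by omega
  all_goals simp

theorem statement1_general (l : ℕ)
    (lam : Fin l → ℤ)
    (hlam1 : ∀ i : Fin l, (i : ℕ) ≠ 0 → lam i = 1)
    (m : ℕ) (w : Fin m → ℤ)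
    (x : Fin (m + 1) → Fin l → ℝ)
    (hx : x ∈ gtPolytope m l lam (fun _ => 0) w)
    (hint : ∀ i j, ∃ z : ℤ, x i j = z) :
    x ∈ Set.extremePoints ℝ (gtPolytope m l lam (fun _ => 0) w) := by
  refine ⟨hx, fun y hy z hz hxyz => ?_⟩
  have hentry : ∀ i j, x i j ∈ openSegment ℝ (y i j) (z i j) := fun i j =>
    Pi.openSegment_subset _ _ (Pi.openSegment_subset y z hxyz i (Set.mem_univ i)) j
      (Set.mem_univ j)
  have hcol : ∀ u ∈ gtPolytope m l lam (fun _ => 0) w, ∀ i (j : Fin l), (j : ℕ) ≠ 0 →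
      u i j ∈ Set.Icc (0 : ℝ) 1 := fun u hu i j hj => by
    simpa [hlam1 j hj] using mem_Icc_of_mem_gtPolytope hu i j
  refine eq_of_mem_gtPolytope_of_forall_ne_zero hy hx fun i j hj => ?_
  obtain ⟨t, ht⟩ := hint i j
  have hext : x i j ∈ Set.extremePoints ℝ (Set.Icc 0 1) :=
    ht ▸ intCast_mem_extremePoints_Icc_zero_one (ht ▸ hcol x hx i j hj)
  exact hext.2 (hcol y hy i j hj) (hcol z hz i j hj) (hentry i j)

/-- For a hook shape `λ = (h,1,…,1)`, `μ = 0`, and any nonnegative weight `w`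
with total sum `h + l - 1`, every integral point of `P_{λ/μ,w}` is an extreme
point of `P_{λ/μ,w}`. -/
theorem statement1 (h l : ℕ) (hh : 1 ≤ h) (hl : 1 ≤ l)
    (lam : Fin l → ℤ)
    (hlam0 : lam ⟨0, hl⟩ = (h : ℤ))
    (hlam1 : ∀ i : Fin l, (i : ℕ) ≠ 0 → lam i = 1)
    (m : ℕ) (w : Fin m → ℤ) (hw : ∀ i, 0 ≤ w i)
    (hsum : ∑ i, w i = (h : ℤ) + (l : ℤ) - 1)
    (x : Fin (m + 1) → Fin l → ℝ)
    (hx : x ∈ gtPolytope m l lam (fun _ => 0) w)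
    (hint : ∀ i j, ∃ z : ℤ, x i j = z) :
    x ∈ Set.extremePoints ℝ (gtPolytope m l lam (fun _ => 0) w) :=
  statement1_general l lam hlam1 m w x hx hint
end

section
/- Suppose μ_i ≥ λ_{i+1} for all 1 ≤ i < n (that is, the skew shape λ/μ is a disjoint union of rows). Then for every nonnegative integer vector w with Σw_i = |λ|−|μ|, the Gelfand–Tsetlin polytope P_{λ/μ,w} is integral: every extreme point of P_{λ/μ,w} has all entries in ℤ. -/
/-!
When `λ/μ` is a disjoint union of rows, the diagonal inequalities of a GT pattern follow from the
column inequalities: `x^{i+1}_{j+1} ≤ λ_{j+1} ≤ μ_j ≤ x^i_j`. In the column increments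
`y^i_j = x^{i+1}_j - x^i_j` the polytope is therefore a transportation polytope: `y ≥ 0` with row
sums `w` and column sums `λ - μ`, all integers. If an extreme point had a non-integral entry, some
increment would be non-integral. A line containing exactly one non-integral increment would have
a non-integral sum, so the `N` non-integral increments lie in at most `N/2` rows and `N/2` columns.
Hence some nonzero `D` supported on them has all line sums zero, and moving `y` by `±εD` stays
inside the polytope.
-/

open Finset

open Filter Topology

section LineSums

variable {ι κ : Type*} [Fintype ι] [Fintype κ]

lemma exists_ne_notMem_of_sum_mem {α G S : Type*} [AddCommGroup G] [SetLike S G]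
    [AddSubgroupClass S G] (H : S) {s : Finset α} {f : α → G} (hs : ∑ a ∈ s, f a ∈ H)
    {a : α} (ha : a ∈ s) (hfa : f a ∉ H) : ∃ b ∈ s, b ≠ a ∧ f b ∉ H := by
  classical
  by_contra! hb
  have hrest : ∑ b ∈ s.erase a, f b ∈ H :=
    sum_mem fun b hb' => hb b (mem_of_mem_erase hb') (ne_of_mem_erase hb')
  apply hfa
  simpa [← add_sum_erase s f ha] using sub_mem hs hrest

lemma sum_col_eq_zero_of_forall_ne {M : Type*} [AddCommMonoid M] {D : ι → κ → M}
    (hrow : ∀ i, ∑ j, D i j = 0) (j₀ : κ) (hcol : ∀ j ≠ j₀, ∑ i, D i j = 0) :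
    ∑ i, D i j₀ = 0 :=
  calc ∑ i, D i j₀ = ∑ j, ∑ i, D i j := (Fintype.sum_eq_single j₀ hcol).symm
    _ = ∑ i, ∑ j, D i j := sum_comm
    _ = 0 := by simp [hrow]

lemma two_mul_card_le_sum_card (P : ι → κ → Prop) [∀ i j, Decidable (P i j)]
    (h : ∀ i j, P i j → ∃ j' ≠ j, P i j') :
    2 * #{i | ∃ j, P i j} ≤ ∑ i, #{j | P i j} := by
  rw [card_filter, mul_sum]
  refine sum_le_sum fun i _ => ?_
  split_ifs with hi
  · obtain ⟨j, hj⟩ := hi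
    obtain ⟨j', hj', hPj'⟩ := h i j hj
    rw [mul_one]
    exact one_lt_card.2 ⟨j, by simpa using hj, j', by simpa using hPj', hj'.symm⟩
  · simp

lemma card_rows_add_card_cols_le (P : ι → κ → Prop) [∀ i j, Decidable (P i j)]
    (hrow : ∀ i j, P i j → ∃ j' ≠ j, P i j') (hcol : ∀ i j, P i j → ∃ i' ≠ i, P i' j) :
    #{i | ∃ j, P i j} + #{j | ∃ i, P i j} ≤ #{p : ι × κ | P p.1 p.2} := by
  have hrows : #{p : ι × κ | P p.1 p.2} = ∑ i, #{j | P i j} := by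
    rw [card_filter, Fintype.sum_prod_type]
    simp only [card_filter]
  have hcols : #{p : ι × κ | P p.1 p.2} = ∑ j, #{i | P i j} := by
    rw [card_filter, Fintype.sum_prod_type_right]
    simp only [card_filter]
  have := two_mul_card_le_sum_card P hrow
  have := two_mul_card_le_sum_card (fun j i => P i j) fun j i h => hcol i j h
  omega

theorem exists_ne_zero_lineSums_eq_zero {K : Type*} [Field K] (P : ι → κ → Prop)
    (hP : ∃ i j, P i j) (hrow : ∀ i j, P i j → ∃ j' ≠ j, P i j')
    (hcol : ∀ i j, P i j → ∃ i' ≠ i, P i' j) :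
    ∃ D : ι → κ → K, D ≠ 0 ∧ (∀ i j, D i j ≠ 0 → P i j) ∧
      (∀ i, ∑ j, D i j = 0) ∧ ∀ j, ∑ i, D i j = 0 := by
  classical
  obtain ⟨i₀, j₀, h₀⟩ := hP
  set T : Finset ι := {i | ∃ j, P i j}
  set C : Finset κ := {j | ∃ i, P i j}
  have hcard : #T + #C ≤ Fintype.card {p : ι × κ // P p.1 p.2} := by
    rw [Fintype.card_subtype]
    exact card_rows_add_card_cols_le P hrow hcol
  have hj₀ : j₀ ∈ C := mem_filter.2 ⟨mem_univ _, i₀, h₀⟩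
  -- The equation of column `j₀` follows from the others, so it is left out of `L`.
  let E : ({p : ι × κ // P p.1 p.2} → K) →ₗ[K] ι → κ → K :=
    { toFun := fun d i j => if h : P i j then d ⟨(i, j), h⟩ else 0
      map_add' := fun a b => by ext i j; by_cases h : P i j <;> simp [h]
      map_smul' := fun c a => by ext i j; by_cases h : P i j <;> simp [h] }
  let L : ({p : ι × κ // P p.1 p.2} → K) →ₗ[K] (T → K) × (C.erase j₀ → K) :=
    { toFun := fun d => (fun i => ∑ j, E d i j, fun j => ∑ i, E d i j)
      map_add' := fun a b => by ext <;> simp [sum_add_distrib]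
      map_smul' := fun c a => by ext <;> simp [mul_sum] }
  have hdim : Module.finrank K ((T → K) × (C.erase j₀ → K)) <
      Module.finrank K ({p : ι × κ // P p.1 p.2} → K) := by
    have := card_erase_of_mem hj₀
    have := card_pos.2 ⟨j₀, hj₀⟩
    simp only [Module.finrank_prod, Module.finrank_fintype_fun_eq_card, Fintype.card_coe]
    omega
  obtain ⟨d, hd, hd0⟩ :=
    (Submodule.ne_bot_iff _).1 (LinearMap.ker_ne_bot_of_finrank_lt (f := L) hdim)
  have hLd : L d = 0 := hd
  have hsupp : ∀ i j, E d i j ≠ 0 → P i j := fun i j h => by_contra fun hPij => h (dif_neg hPij)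
  have hrow0 : ∀ i, ∑ j, E d i j = 0 := by
    intro i
    by_cases hi : i ∈ T
    · exact congr_fun (congr_arg Prod.fst hLd) ⟨i, hi⟩
    · exact sum_eq_zero fun j _ =>
        not_not.1 fun h => hi (mem_filter.2 ⟨mem_univ _, j, hsupp i j h⟩)
  have hcol0 : ∀ j ≠ j₀, ∑ i, E d i j = 0 := by
    intro j hj
    by_cases hjC : j ∈ C
    · exact congr_fun (congr_arg Prod.snd hLd) ⟨j, mem_erase.2 ⟨hj, hjC⟩⟩
    · exact sum_eq_zero fun i _ =>
        not_not.1 fun h => hjC (mem_filter.2 ⟨mem_univ _, i, hsupp i j h⟩)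
  refine ⟨E d, fun h => hd0 (funext fun p => ?_), hsupp, hrow0, fun j => ?_⟩
  · simpa [E, p.2] using congr_fun (congr_fun h p.1.1) p.1.2
  · rcases eq_or_ne j j₀ with rfl | hj
    · exact sum_col_eq_zero_of_forall_ne hrow0 j hcol0
    · exact hcol0 j hj

theorem exists_ne_zero_lineSums_eq_zero_of_notMem {K S : Type*} [Field K] [SetLike S K]
    [AddSubgroupClass S K] (H : S) (y : ι → κ → K) (hrow : ∀ i, ∑ j, y i j ∈ H)
    (hcol : ∀ j, ∑ i, y i j ∈ H) (hy : ∃ i j, y i j ∉ H) :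
    ∃ D : ι → κ → K, D ≠ 0 ∧ (∀ i j, D i j ≠ 0 → y i j ∉ H) ∧
      (∀ i, ∑ j, D i j = 0) ∧ ∀ j, ∑ i, D i j = 0 :=
  exists_ne_zero_lineSums_eq_zero (fun i j => y i j ∉ H) hy
    (fun i j h => by simpa using exists_ne_notMem_of_sum_mem H (hrow i) (mem_univ j) h)
    (fun i j h => by simpa using exists_ne_notMem_of_sum_mem H (hcol j) (mem_univ i) h)

end LineSums

lemma exists_pos_forall_mul_abs_le {α : Type*} [Finite α] {y D : α → ℝ} (hy : ∀ a, 0 ≤ y a)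
    (hD : ∀ a, D a ≠ 0 → 0 < y a) : ∃ ε > 0, ∀ a, ε * |D a| ≤ y a := by
  have h : ∀ a, ∀ᶠ ε in 𝓝 (0 : ℝ), ε * |D a| ≤ y a := by
    intro a
    rcases eq_or_ne (D a) 0 with h0 | h0
    · simp [h0, hy a]
    · have hlim : Tendsto (fun ε : ℝ => ε * |D a|) (𝓝 0) (𝓝 0) := by
        simpa using (continuous_mul_const |D a|).tendsto 0
      exact hlim.eventually (eventually_le_nhds (hD a h0))
  obtain ⟨ε, hεy, hε⟩ :=
    ((eventually_all.2 h).filter_mono nhdsWithin_le_nhds |>.and self_mem_nhdsWithin).exists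
      (f := 𝓝[>] (0 : ℝ))
  exact ⟨ε, hε, hεy⟩

lemma Fin.partialSum_last {M : Type*} [AddCommMonoid M] {n : ℕ} (f : Fin n → M) :
    Fin.partialSum f (Fin.last n) = ∑ i, f i := by
  rw [Fin.partialSum, Fin.val_last, List.take_of_length_le (by simp), List.sum_ofFn]

lemma Fin.partialSum_succ_sub_castSucc {G : Type*} [AddCommGroup G] {n : ℕ}
    (f : Fin (n + 1) → G) (i : Fin (n + 1)) :
    Fin.partialSum (fun k => f k.succ - f k.castSucc) i = f i - f 0 := by
  induction i using Fin.induction with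
  | zero => simp
  | succ i ih => rw [Fin.partialSum_succ, ih]; abel

section GelfandTsetlin

variable {m n : ℕ}

def gtIncrements (x : Fin (m + 1) → Fin n → ℝ) (i : Fin m) (j : Fin n) : ℝ :=
  x i.succ j - x i.castSucc j

def colPartialSums (D : Fin m → Fin n → ℝ) (i : Fin (m + 1)) (j : Fin n) : ℝ :=
  Fin.partialSum (fun k => D k j) i

lemma sum_gtIncrements_col (x : Fin (m + 1) → Fin n → ℝ) (j : Fin n) :
    ∑ i, gtIncrements x i j = x (Fin.last m) j - x 0 j := by
  rw [← Fin.partialSum_last]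
  exact Fin.partialSum_succ_sub_castSucc (fun i => x i j) _

lemma gtIncrements_add_smul_colPartialSums (x : Fin (m + 1) → Fin n → ℝ)
    (D : Fin m → Fin n → ℝ) (t : ℝ) (i : Fin m) (j : Fin n) :
    gtIncrements (x + t • colPartialSums D) i j = gtIncrements x i j + t * D i j := by
  simp only [gtIncrements, colPartialSums, Pi.add_apply, Pi.smul_apply, smul_eq_mul,
    Fin.partialSum_succ]
  ring

lemma mem_of_gtIncrements_mem {S : Type*} [SetLike S ℝ] [AddSubgroupClass S ℝ] (H : S)
    {x : Fin (m + 1) → Fin n → ℝ} (h0 : ∀ j, x 0 j ∈ H) (h : ∀ i j, gtIncrements x i j ∈ H)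
    (i : Fin (m + 1)) (j : Fin n) : x i j ∈ H := by
  induction i using Fin.induction with
  | zero => exact h0 j
  | succ i ih => simpa [gtIncrements] using add_mem ih (h i j)

def IsDisjointRows (lam mu : Fin n → ℤ) : Prop :=
  ∀ i : Fin n, ∀ h : (i : ℕ) + 1 < n, lam ⟨(i : ℕ) + 1, h⟩ ≤ mu i

variable {lam mu : Fin n → ℤ}

lemma isGTPattern_of_monotone
    (hdisj : IsDisjointRows lam mu) {x : Fin (m + 1) → Fin n → ℝ} (hmono : ∀ j, Monotone (x · j))
    (hbot : ∀ j, x 0 j = mu j) (htop : ∀ j, x (Fin.last m) j = lam j) : IsGTPattern m n x := by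
  refine ⟨fun i j => Fin.monotone_iff_le_succ.1 (hmono j) i, fun i j h => ?_⟩
  calc x i.succ ⟨j + 1, h⟩ ≤ x (Fin.last m) ⟨j + 1, h⟩ := hmono _ (Fin.le_last _)
    _ = lam ⟨j + 1, h⟩ := htop _
    _ ≤ mu j := by exact_mod_cast hdisj j h
    _ = x 0 j := (hbot j).symm
    _ ≤ x i.castSucc j := hmono j (Fin.zero_le _)

lemma mem_gtPolytope_iff
    (hdisj : IsDisjointRows lam mu) {w : Fin m → ℤ} {x : Fin (m + 1) → Fin n → ℝ} :
    x ∈ gtPolytope m n lam mu w ↔ (∀ i j, 0 ≤ gtIncrements x i j) ∧ (∀ j, x 0 j = mu j) ∧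
      (∀ j, x (Fin.last m) j = lam j) ∧ ∀ i, ∑ j, gtIncrements x i j = w i := by
  simp only [gtPolytope, gtIncrements, sum_sub_distrib, sub_nonneg]
  constructor
  · rintro ⟨⟨hcol, -⟩, h⟩
    exact ⟨hcol, h⟩
  · rintro ⟨hcol, hbot, htop, hrow⟩
    exact ⟨isGTPattern_of_monotone hdisj (fun j => Fin.monotone_iff_le_succ.2 fun i => hcol i j)
      hbot htop, hbot, htop, hrow⟩

lemma add_smul_colPartialSums_mem_gtPolytope
    (hdisj : IsDisjointRows lam mu) {w : Fin m → ℤ} {x : Fin (m + 1) → Fin n → ℝ}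
    (hx : x ∈ gtPolytope m n lam mu w) {D : Fin m → Fin n → ℝ} (hrow : ∀ i, ∑ j, D i j = 0)
    (hcol : ∀ j, ∑ i, D i j = 0) {t : ℝ} (ht : ∀ i j, |t| * |D i j| ≤ gtIncrements x i j) :
    x + t • colPartialSums D ∈ gtPolytope m n lam mu w := by
  rw [mem_gtPolytope_iff hdisj] at hx ⊢
  obtain ⟨-, hbot, htop, hrowx⟩ := hx
  refine ⟨fun i j => ?_, fun j => ?_, fun j => ?_, fun i => ?_⟩
  · rw [gtIncrements_add_smul_colPartialSums]
    have := neg_abs_le (t * D i j)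
    rw [abs_mul] at this
    linarith [ht i j]
  · simp [colPartialSums, hbot]
  · simp [colPartialSums, Fin.partialSum_last, hcol, htop]
  · simp [gtIncrements_add_smul_colPartialSums, sum_add_distrib, ← mul_sum, hrow, hrowx]

lemma eq_zero_of_mem_extremePoints_gtPolytope
    (hdisj : IsDisjointRows lam mu) {w : Fin m → ℤ} {x : Fin (m + 1) → Fin n → ℝ}
    (hx : x ∈ (gtPolytope m n lam mu w).extremePoints ℝ) {D : Fin m → Fin n → ℝ}
    (hrow : ∀ i, ∑ j, D i j = 0) (hcol : ∀ j, ∑ i, D i j = 0)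
    (hD : ∀ i j, D i j ≠ 0 → 0 < gtIncrements x i j) : D = 0 := by
  have hy := ((mem_gtPolytope_iff hdisj).1 hx.1).1
  obtain ⟨ε, hε, hεD⟩ := exists_pos_forall_mul_abs_le (y := fun p : Fin m × Fin n =>
    gtIncrements x p.1 p.2) (D := fun p => D p.1 p.2) (fun p => hy p.1 p.2) (fun p => hD p.1 p.2)
  have hplus := add_smul_colPartialSums_mem_gtPolytope hdisj hx.1 hrow hcol (t := ε)
    fun i j => by simpa [abs_of_pos hε] using hεD (i, j)
  have hminus := add_smul_colPartialSums_mem_gtPolytope hdisj hx.1 hrow hcol (t := -ε)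
    fun i j => by simpa [abs_of_pos hε] using hεD (i, j)
  rw [neg_smul, ← sub_eq_add_neg] at hminus
  have hS : ε • colPartialSums D = 0 := by
    simpa using hx.2 hplus hminus (mem_openSegment_add_sub _ _)
  ext i j
  have h := congr_fun (congr_fun ((smul_eq_zero.1 hS).resolve_left hε.ne') i.succ) j
  have h' := congr_fun (congr_fun ((smul_eq_zero.1 hS).resolve_left hε.ne') i.castSucc) j
  simp only [colPartialSums, Fin.partialSum_succ, Pi.zero_apply] at h h'
  simpa [h'] using h

end GelfandTsetlin

theorem statement2_general (n : ℕ) (lam mu : Fin n → ℤ)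
    (hdisj : ∀ i : Fin n, ∀ h : (i : ℕ) + 1 < n, lam ⟨(i : ℕ) + 1, h⟩ ≤ mu i)
    (m : ℕ) (w : Fin m → ℤ)
    (x : Fin (m + 1) → Fin n → ℝ)
    (hx : x ∈ Set.extremePoints ℝ (gtPolytope m n lam mu w)) :
    ∀ i j, ∃ z : ℤ, x i j = z := by
  obtain ⟨hy, hbot, htop, hrow⟩ := (mem_gtPolytope_iff hdisj).1 hx.1
  suffices hint : ∀ i j, gtIncrements x i j ∈ (⊥ : Subring ℝ) by
    intro i j
    obtain ⟨z, hz⟩ := Subring.mem_bot.1 <|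
      mem_of_gtIncrements_mem (⊥ : Subring ℝ) (fun j => hbot j ▸ intCast_mem _ _) hint i j
    exact ⟨z, hz.symm⟩
  by_contra! hfrac
  obtain ⟨D, hD0, hsupp, hDrow, hDcol⟩ :=
    exists_ne_zero_lineSums_eq_zero_of_notMem (⊥ : Subring ℝ) (gtIncrements x)
      (fun i => hrow i ▸ intCast_mem _ _)
      (fun j => by
        rw [sum_gtIncrements_col, htop, hbot]
        exact sub_mem (intCast_mem _ _) (intCast_mem _ _))
      hfrac
  refine hD0 (eq_zero_of_mem_extremePoints_gtPolytope hdisj hx hDrow hDcol fun i j hij => ?_)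
  exact (hy i j).lt_of_ne fun h0 => hsupp i j hij (h0 ▸ zero_mem _)

/-- If the skew shape `λ/μ` is a disjoint union of rows (`μ_i ≥ λ_{i+1}`), then
for every nonnegative weight `w` with total sum `|λ|-|μ|` the GT-polytope
`P_{λ/μ,w}` is integral: every extreme point has integer entries. -/
theorem statement2 (n : ℕ) (hn : 1 ≤ n) (lam mu : Fin n → ℤ)
    (hlam : Antitone lam) (hmu : Antitone mu)
    (hmu0 : ∀ j, 0 ≤ mu j) (hge : ∀ j, mu j ≤ lam j)
    (hdisj : ∀ i : Fin n, ∀ h : (i : ℕ) + 1 < n, lam ⟨(i : ℕ) + 1, h⟩ ≤ mu i)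
    (m : ℕ) (w : Fin m → ℤ) (hw : ∀ i, 0 ≤ w i)
    (hsum : ∑ i, w i = ∑ j, lam j - ∑ j, mu j)
    (x : Fin (m + 1) → Fin n → ℝ)
    (hx : x ∈ Set.extremePoints ℝ (gtPolytope m n lam mu w)) :
    ∀ i j, ∃ z : ℤ, x i j = z :=
  statement2_general n lam mu hdisj m w x hx
end

section
/- Let w and w' be nonnegative integer weight vectors with w' a refinement of w, both of total sum |λ|−|μ|. Then the (finite) number of integral GT-patterns of shape λ/μ and weight w is at most the number of integral GT-patterns of shape λ/μ and weight w'. -/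
/-!
A GT-pattern `x` of weight `w` is a chain of rows `x 0 ≤ x 1 ≤ … ≤ x m` in which each row
interlaces the next. Join consecutive rows by raising the entries of `x k` to those of `x (k+1)`
one column at a time, from left to right; parametrized by row sum, this is a monotone path
through all rows of `x`. Sampling the path at the row sums `∑ μ + w'₁ + … + w'ₜ` gives a
GT-pattern of weight `w'`: every fine step stays inside one coarse step `x k → x (k+1)`, so each
diagonal inequality is sandwiched by one of `x`. Every partial sum of `w` is a partial sum of
`w'`, so all rows of `x` are among the samples and `x` can be read back off its sampling.
Water-filling an integral gap by an integral amount stays integral.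
-/

open Finset

/-- `w'` is a (composition) refinement of `w`: there is a monotone surjection
from fine indices onto coarse indices such that each entry of `w` is the sum of
the entries of `w'` in the corresponding block (blocks are consecutive and
nonempty). -/
def Refines {m m' : ℕ} (w : Fin m → ℤ) (w' : Fin m' → ℤ) : Prop :=
  ∃ g : Fin m' → Fin m, Monotone g ∧ Function.Surjective g ∧
    ∀ s : Fin m, w s = ∑ t ∈ Finset.univ.filter (fun t => g t = s), w' t

namespace Fin

variable {M : Type*} {n : ℕ}

theorem partialSum_eq_sum_castSucc_lt [AddCommMonoid M] (f : Fin n → M) (k : Fin (n + 1)) :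
    partialSum f k = ∑ l with l.castSucc < k, f l := by
  induction k using Fin.induction with
  | zero => simp
  | succ k ih =>
    have hIio : ({l | l.castSucc < k.castSucc} : Finset (Fin n)) = Iio k := by ext; simp
    have hIic : ({l | l.castSucc < k.succ} : Finset (Fin n)) = Iic k := by
      ext; simp [castSucc_lt_succ_iff]
    rw [partialSum_succ, ih, hIio, hIic, ← Iio_insert, sum_insert (by simp), add_comm]

theorem partialSum_last_s6 [AddCommMonoid M] (f : Fin n → M) :
    partialSum f (last n) = ∑ l, f l := by
  simp [partialSum_eq_sum_castSucc_lt, castSucc_lt_last]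

theorem monotone_partialSum [AddCommMonoid M] [PartialOrder M] [IsOrderedAddMonoid M]
    {f : Fin n → M} (hf : 0 ≤ f) : Monotone (partialSum f) :=
  monotone_iff_le_succ.2 fun k => by
    rw [partialSum_succ]; exact le_add_of_nonneg_right (hf k)

theorem sum_succ_sub_castSucc [AddCommGroup M] (f : Fin (n + 1) → M) :
    ∑ k : Fin n, (f k.succ - f k.castSucc) = f (last n) - f 0 := by
  have h : f 0 + partialSum (fun k => -f k.castSucc + f k.succ) (last n) = f (last n) :=
    congrFun (partialSum_left_neg f) (last n)
  simp only [partialSum_last_s6, neg_add_eq_sub] at h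
  rw [← h, add_sub_cancel_left]

end Fin

section WaterFill

variable {n : ℕ} {d : Fin n → ℝ} {c : ℝ}

/-- Pour the amount `c` into bins of capacities `d 0, d 1, …`, filling them from left to right. -/
def waterFill (d : Fin n → ℝ) (c : ℝ) (j : Fin n) : ℝ :=
  min c (Fin.partialSum d j.succ) - min c (Fin.partialSum d j.castSucc)

theorem monotone_waterFill (hd : 0 ≤ d) (j : Fin n) : Monotone fun c => waterFill d c j := by
  intro c c' hc
  have := Fin.monotone_partialSum hd (Fin.castSucc_le_succ j)
  simp only [waterFill, min_def]
  split_ifs <;> linarith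

theorem waterFill_of_nonpos (hd : 0 ≤ d) (hc : c ≤ 0) : waterFill d c = 0 := by
  have hP : ∀ k, c ≤ Fin.partialSum d k := fun k =>
    hc.trans (by simpa using Fin.monotone_partialSum hd (Fin.zero_le k))
  funext j
  simp [waterFill, min_eq_left (hP _)]

theorem waterFill_of_sum_le (hd : 0 ≤ d) (hc : ∑ j, d j ≤ c) : waterFill d c = d := by
  have hP : ∀ k, Fin.partialSum d k ≤ c := fun k =>
    (Fin.monotone_partialSum hd (Fin.le_last k)).trans (by rwa [Fin.partialSum_last_s6])
  funext j
  rw [waterFill, min_eq_right (hP _), min_eq_right (hP _), Fin.partialSum_succ, add_sub_cancel_left]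

theorem sum_waterFill (d : Fin n → ℝ) (c : ℝ) :
    ∑ j, waterFill d c j = min c (∑ j, d j) - min c 0 := by
  simp only [waterFill]
  rw [Fin.sum_succ_sub_castSucc (fun k => min c (Fin.partialSum d k)), Fin.partialSum_last_s6,
    Fin.partialSum_zero]

theorem waterFill_mem {S : AddSubgroup ℝ} (hd : ∀ j, d j ∈ S) (hc : c ∈ S) (j : Fin n) :
    waterFill d c j ∈ S := by
  have hP : ∀ k, min c (Fin.partialSum d k) ∈ S := fun k => by
    rcases min_choice c (Fin.partialSum d k) with h | h <;> rw [h]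
    · exact hc
    · rw [Fin.partialSum_eq_sum_castSucc_lt]; exact S.sum_mem fun l _ => hd l
  exact S.sub_mem (hP _) (hP _)

end WaterFill

section RowPath

variable {m n : ℕ} {x : Fin (m + 1) → Fin n → ℝ}

/-- The path through the rows of `x`, parametrized by row sum. -/
def rowPath (x : Fin (m + 1) → Fin n → ℝ) (s : ℝ) : Fin n → ℝ :=
  x 0 + ∑ k : Fin m, waterFill (x k.succ - x k.castSucc) (s - ∑ j, x k.castSucc j)

theorem monotone_rowSum (hx : ∀ k : Fin m, x k.castSucc ≤ x k.succ) :
    Monotone fun k => ∑ j, x k j :=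
  Fin.monotone_iff_le_succ.2 fun k => sum_le_sum fun j _ => hx k j

theorem rowPath_rowSum (hx : ∀ k : Fin m, x k.castSucc ≤ x k.succ) (r : Fin (m + 1)) :
    rowPath x (∑ j, x r j) = x r := by
  have hS := monotone_rowSum hx
  have hblock : ∀ k : Fin m,
      waterFill (x k.succ - x k.castSucc) (∑ j, x r j - ∑ j, x k.castSucc j) =
        if k.castSucc < r then x k.succ - x k.castSucc else 0 := by
    intro k
    split_ifs with hk
    · refine waterFill_of_sum_le (sub_nonneg.2 (hx k)) ?_
      simp only [Pi.sub_apply, sum_sub_distrib]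
      exact sub_le_sub_right (hS (Fin.castSucc_lt_iff_succ_le.1 hk)) _
    · exact waterFill_of_nonpos (sub_nonneg.2 (hx k)) (sub_nonpos.2 (hS (not_lt.1 hk)))
  rw [rowPath, sum_congr rfl fun k _ => hblock k, ← sum_filter,
    ← Fin.partialSum_eq_sum_castSucc_lt]
  simpa [neg_add_eq_sub] using congrFun (Fin.partialSum_left_neg x) r

theorem monotone_rowPath (hx : ∀ k : Fin m, x k.castSucc ≤ x k.succ) : Monotone (rowPath x) :=
  fun _ _ hs => add_le_add le_rfl (sum_le_sum fun k _ j =>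
    monotone_waterFill (sub_nonneg.2 (hx k)) j (sub_le_sub_right hs _))

theorem sum_rowPath {s : ℝ}
    (h0 : ∑ j, x 0 j ≤ s) (h1 : s ≤ ∑ j, x (Fin.last m) j) : ∑ j, rowPath x s j = s := by
  have hblock : ∀ k : Fin m,
      ∑ j, waterFill (x k.succ - x k.castSucc) (s - ∑ j, x k.castSucc j) j =
        min s (∑ j, x k.succ j) - min s (∑ j, x k.castSucc j) := by
    intro k
    rw [sum_waterFill, ← sub_self (∑ j, x k.castSucc j)]
    simp only [Pi.sub_apply, sum_sub_distrib, min_sub_sub_right, sub_sub_sub_cancel_right]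
  simp only [rowPath, Pi.add_apply, Finset.sum_apply]
  rw [sum_add_distrib, sum_comm, sum_congr rfl fun k _ => hblock k,
    Fin.sum_succ_sub_castSucc (fun k => min s (∑ j, x k j)), min_eq_left h1, min_eq_right h0,
    add_sub_cancel]

theorem rowPath_mem {S : AddSubgroup ℝ} (hx : ∀ k j, x k j ∈ S) {s : ℝ} (hs : s ∈ S)
    (j : Fin n) : rowPath x s j ∈ S := by
  simp only [rowPath, Pi.add_apply, Finset.sum_apply]
  exact S.add_mem (hx 0 j) (S.sum_mem fun k _ => waterFill_mem
    (fun j => S.sub_mem (hx _ j) (hx _ j)) (S.sub_mem hs (S.sum_mem fun j _ => hx _ j)) j)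

end RowPath

section Refinement

variable {m m' : ℕ} {g : Fin m' → Fin m} {w : Fin m → ℤ} {w' : Fin m' → ℤ}

theorem partialSum_eq_sum_of_fiberwise (hgw : ∀ s, w s = ∑ t with g t = s, w' t)
    (k : Fin (m + 1)) : Fin.partialSum w k = ∑ u with (g u).castSucc < k, w' u := by
  rw [Fin.partialSum_eq_sum_castSucc_lt, ← sum_fiberwise_of_maps_to (g := g)
    (t := univ.filter fun l : Fin m => l.castSucc < k) (by simp)]
  refine sum_congr rfl fun l hl => ?_
  rw [hgw, filter_filter]
  refine sum_congr (filter_congr fun u _ => ?_) fun _ _ => rfl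
  simp only [mem_filter, mem_univ, true_and] at hl
  exact ⟨fun h => ⟨h ▸ hl, h⟩, And.right⟩

theorem partialSum_castSucc_le_of_fiberwise (hg : Monotone g) (hw' : 0 ≤ w')
    (hgw : ∀ s, w s = ∑ t with g t = s, w' t) (t : Fin m') :
    Fin.partialSum w (g t).castSucc ≤ Fin.partialSum w' t.castSucc := by
  rw [partialSum_eq_sum_of_fiberwise hgw, Fin.partialSum_eq_sum_castSucc_lt]
  refine sum_le_sum_of_subset_of_nonneg (fun u => ?_) fun u _ _ => hw' u
  simpa using hg.reflect_lt

theorem partialSum_succ_le_of_fiberwise (hg : Monotone g) (hw' : 0 ≤ w')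
    (hgw : ∀ s, w s = ∑ t with g t = s, w' t) (t : Fin m') :
    Fin.partialSum w' t.succ ≤ Fin.partialSum w (g t).succ := by
  rw [partialSum_eq_sum_of_fiberwise hgw, Fin.partialSum_eq_sum_castSucc_lt]
  refine sum_le_sum_of_subset_of_nonneg (fun u => ?_) fun u _ _ => hw' u
  simpa [Fin.castSucc_lt_succ_iff] using fun h => hg h

theorem partialSum_last_of_fiberwise (hgw : ∀ s, w s = ∑ t with g t = s, w' t) :
    Fin.partialSum w' (Fin.last m') = Fin.partialSum w (Fin.last m) := by
  simp [partialSum_eq_sum_of_fiberwise hgw, Fin.partialSum_last_s6, Fin.castSucc_lt_last]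

theorem exists_partialSum_eq_of_fiberwise (hg : Monotone g) (hg' : Function.Surjective g)
    (hgw : ∀ s, w s = ∑ t with g t = s, w' t) (k : Fin (m + 1)) :
    ∃ i, Fin.partialSum w' i = Fin.partialSum w k := by
  induction k using Fin.lastCases with
  | last => exact ⟨Fin.last m', partialSum_last_of_fiberwise hgw⟩
  | cast l =>
    obtain ⟨t, ht, ht_min⟩ := exists_min_image (univ.filter fun u => g u = l) id
      (by simpa [Finset.Nonempty] using hg' l)
    simp only [mem_filter, mem_univ, true_and, id] at ht ht_min
    refine ⟨t.castSucc, ?_⟩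
    rw [partialSum_eq_sum_of_fiberwise hgw, Fin.partialSum_eq_sum_castSucc_lt]
    refine sum_congr (filter_congr fun u _ => ?_) fun _ _ => rfl
    simp only [Fin.castSucc_lt_castSucc_iff]
    constructor
    · intro hu
      exact lt_of_le_of_ne (ht ▸ hg hu.le) fun h => (ht_min u h).not_gt hu
    · intro hu
      exact hg.reflect_lt (ht ▸ hu)

end Refinement

section Pattern

variable {m m' n : ℕ} {lam mu : Fin n → ℤ} {w : Fin m → ℤ} {w' : Fin m' → ℤ}
  {x : Fin (m + 1) → Fin n → ℝ}

theorem rowSum_of_mem_gtPolytope (hx : x ∈ gtPolytope m n lam mu w) (k : Fin (m + 1)) :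
    ∑ j, x k j = ∑ j, x 0 j + Fin.partialSum w k := by
  induction k using Fin.induction with
  | zero => simp
  | succ k ih =>
    rw [Fin.partialSum_succ, Int.cast_add, ← add_assoc, ← ih, ← hx.2.2.2 k]
    ring

def refinePattern (w' : Fin m' → ℤ) (x : Fin (m + 1) → Fin n → ℝ) :
    Fin (m' + 1) → Fin n → ℝ :=
  fun i => rowPath x (∑ j, x 0 j + Fin.partialSum w' i)

theorem refinePattern_le (hx : x ∈ gtPolytope m n lam mu w) {i : Fin (m' + 1)} {k : Fin (m + 1)}
    (h : Fin.partialSum w' i ≤ Fin.partialSum w k) : refinePattern w' x i ≤ x k := by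
  rw [← rowPath_rowSum hx.1.1 k, rowSum_of_mem_gtPolytope hx]
  exact monotone_rowPath hx.1.1 (by gcongr)

theorem le_refinePattern (hx : x ∈ gtPolytope m n lam mu w) {i : Fin (m' + 1)} {k : Fin (m + 1)}
    (h : Fin.partialSum w k ≤ Fin.partialSum w' i) : x k ≤ refinePattern w' x i := by
  rw [← rowPath_rowSum hx.1.1 k, rowSum_of_mem_gtPolytope hx]
  exact monotone_rowPath hx.1.1 (by gcongr)

theorem refinePattern_eq (hx : x ∈ gtPolytope m n lam mu w) {i : Fin (m' + 1)} {k : Fin (m + 1)}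
    (h : Fin.partialSum w' i = Fin.partialSum w k) : refinePattern w' x i = x k :=
  le_antisymm (refinePattern_le hx h.le) (le_refinePattern hx h.ge)

variable {g : Fin m' → Fin m}

theorem isGTPattern_refinePattern (hg : Monotone g) (hw' : 0 ≤ w')
    (hgw : ∀ s, w s = ∑ t with g t = s, w' t) (hx : x ∈ gtPolytope m n lam mu w) :
    IsGTPattern m' n (refinePattern w' x) := by
  refine ⟨fun t => monotone_rowPath hx.1.1 ?_, fun t j hj => ?_⟩
  · rw [Fin.partialSum_succ, Int.cast_add, ← add_assoc]
    exact le_add_of_nonneg_right (by exact_mod_cast hw' t)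
  · calc refinePattern w' x t.succ ⟨j + 1, hj⟩
        ≤ x (g t).succ ⟨j + 1, hj⟩ :=
          refinePattern_le hx (partialSum_succ_le_of_fiberwise hg hw' hgw t) _
      _ ≤ x (g t).castSucc j := hx.1.2 (g t) j hj
      _ ≤ refinePattern w' x t.castSucc j :=
          le_refinePattern hx (partialSum_castSucc_le_of_fiberwise hg hw' hgw t) j

theorem refinePattern_mem_gtPolytope (hg : Monotone g) (hw' : 0 ≤ w')
    (hgw : ∀ s, w s = ∑ t with g t = s, w' t) (hx : x ∈ gtPolytope m n lam mu w) :
    refinePattern w' x ∈ gtPolytope m' n lam mu w' := by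
  have hlast := partialSum_last_of_fiberwise hgw
  have hsum : ∀ i, ∑ j, refinePattern w' x i j = ∑ j, x 0 j + Fin.partialSum w' i := by
    intro i
    refine sum_rowPath ?_ ?_
    · simpa using Fin.monotone_partialSum hw' (Fin.zero_le i)
    · rw [rowSum_of_mem_gtPolytope hx (Fin.last m), ← hlast]
      gcongr
      exact Fin.monotone_partialSum hw' (Fin.le_last i)
  refine ⟨isGTPattern_refinePattern hg hw' hgw hx, fun j => ?_, fun j => ?_, fun t => ?_⟩
  · rw [refinePattern_eq hx (k := 0) (by simp)]
    exact hx.2.1 j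
  · rw [refinePattern_eq hx hlast]
    exact hx.2.2.1 j
  · rw [hsum, hsum, Fin.partialSum_succ, Int.cast_add]
    ring

theorem refinePattern_isInt (hx : ∀ i j, ∃ z : ℤ, x i j = z) (i : Fin (m' + 1)) (j : Fin n) :
    ∃ z : ℤ, refinePattern w' x i j = z := by
  have hmem : ∀ r : ℝ, r ∈ (Int.castAddHom ℝ).range ↔ ∃ z : ℤ, r = z := fun r => by
    rw [AddMonoidHom.mem_range]; exact exists_congr fun z => eq_comm
  have hx' : ∀ k j, x k j ∈ (Int.castAddHom ℝ).range := fun k j => (hmem _).2 (hx k j)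
  refine (hmem _).1 (rowPath_mem hx' ?_ j)
  exact add_mem (sum_mem fun j _ => hx' 0 j) ⟨_, rfl⟩

theorem injOn_refinePattern (hg : Monotone g) (hg' : Function.Surjective g)
    (hgw : ∀ s, w s = ∑ t with g t = s, w' t) :
    Set.InjOn (refinePattern (m := m) (n := n) w') (gtPolytope m n lam mu w) := by
  intro x hx y hy hxy
  funext k
  obtain ⟨i, hi⟩ := exists_partialSum_eq_of_fiberwise hg hg' hgw k
  rw [← refinePattern_eq hx hi, ← refinePattern_eq hy hi, hxy]

end Pattern

theorem finite_integral_gtPolytope (m n : ℕ) (lam mu : Fin n → ℤ) (w : Fin m → ℤ) :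
    {x | x ∈ gtPolytope m n lam mu w ∧ ∀ i j, ∃ z : ℤ, x i j = (z : ℝ)}.Finite := by
  refine ((Set.finite_Icc (fun _ => mu) (fun _ => lam)).image fun z i j => (z i j : ℝ)).subset ?_
  rintro x ⟨hx, hxz⟩
  choose z hz using hxz
  have hcol : ∀ j, Monotone fun i => x i j := fun j =>
    Fin.monotone_iff_le_succ.2 fun i => hx.1.1 i j
  refine ⟨z, ⟨fun i j => ?_, fun i j => ?_⟩, funext₂ fun i j => (hz i j).symm⟩
  · have h : x 0 j ≤ x i j := hcol j (Fin.zero_le i)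
    rw [hx.2.1 j, hz i j] at h
    exact_mod_cast h
  · have h : x i j ≤ x (Fin.last m) j := hcol j (Fin.le_last i)
    rw [hx.2.2.1 j, hz i j] at h
    exact_mod_cast h

theorem statement6_general (n : ℕ) (lam mu : Fin n → ℤ)
    (m m' : ℕ) (w : Fin m → ℤ) (w' : Fin m' → ℤ)
    (hw' : ∀ i, 0 ≤ w' i)
    (href : Refines w w') :
    {x : Fin (m + 1) → Fin n → ℝ |
        x ∈ gtPolytope m n lam mu w ∧ ∀ i j, ∃ z : ℤ, x i j = (z : ℝ)}.ncard ≤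
    {x : Fin (m' + 1) → Fin n → ℝ |
        x ∈ gtPolytope m' n lam mu w' ∧ ∀ i j, ∃ z : ℤ, x i j = (z : ℝ)}.ncard := by
  obtain ⟨g, hg, hg', hgw⟩ := href
  refine Set.ncard_le_ncard_of_injOn (refinePattern w') ?_
    ((injOn_refinePattern hg hg' hgw).mono fun x hx => hx.1)
    (finite_integral_gtPolytope m' n lam mu w')
  rintro x ⟨hx, hxz⟩
  exact ⟨refinePattern_mem_gtPolytope hg hw' hgw hx, refinePattern_isInt hxz⟩

/-- If `w'` refines `w`, then the number of integral GT-patterns of shape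
`λ/μ` and weight `w` is at most the number of integral GT-patterns of shape
`λ/μ` and weight `w'`. -/
theorem statement6 (n : ℕ) (hn : 1 ≤ n) (lam mu : Fin n → ℤ)
    (hlam : Antitone lam) (hmu : Antitone mu)
    (hmu0 : ∀ j, 0 ≤ mu j) (hge : ∀ j, mu j ≤ lam j)
    (m m' : ℕ) (w : Fin m → ℤ) (w' : Fin m' → ℤ)
    (hw : ∀ i, 0 ≤ w i) (hw' : ∀ i, 0 ≤ w' i)
    (hsum : ∑ i, w i = ∑ j, lam j - ∑ j, mu j)
    (hsum' : ∑ i, w' i = ∑ j, lam j - ∑ j, mu j)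
    (href : Refines w w') :
    {x : Fin (m + 1) → Fin n → ℝ |
        x ∈ gtPolytope m n lam mu w ∧ ∀ i j, ∃ z : ℤ, x i j = (z : ℝ)}.ncard ≤
    {x : Fin (m' + 1) → Fin n → ℝ |
        x ∈ gtPolytope m' n lam mu w' ∧ ∀ i j, ∃ z : ℤ, x i j = (z : ℝ)}.ncard :=
  statement6_general n lam mu m m' w w' hw' href
end

section
/- Let w and w' be nonnegative integer weight vectors with w' a refinement of w, both of total sum |λ|−|μ|. If the Gelfand–Tsetlin polytope P_{λ/μ,w} is nonempty, then P_{λ/μ,w'} is nonempty. (Equivalently: if P_{λ/μ,w'} is empty then P_{λ/μ,w} is empty.) -/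
open Finset

/-! Refine a pattern `x` for `w` by walking along the segments joining its consecutive rows: the
fine row at partial sum `ℓ` of `w'` is the point with coordinate sum `ℓ` on the segment from row
`s` to row `s + 1` of `x`, where `s` is the coarse step containing that fine step. Moving along a
segment is monotone, and two rows squeezed between two interlacing rows interlace, so the result
is again a Gelfand–Tsetlin pattern. Consecutive segments fit together because comparable rows with
equal sums coincide. -/

section RowOfSum

variable {n : ℕ} {a b : Fin n → ℝ} {c : ℝ}

/-- The point of the segment `[a, b]` with coordinate sum `c` (it is `a` if `a` and `b` have
the same sum). -/
noncomputable def rowOfSum (a b : Fin n → ℝ) (c : ℝ) (j : Fin n) : ℝ :=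
  a j + (c - ∑ k, a k) / (∑ k, b k - ∑ k, a k) * (b j - a j)

lemma eq_of_le_of_sum_le (hab : a ≤ b) (h : ∑ j, b j ≤ ∑ j, a j) : a = b :=
  funext fun j => (sum_eq_sum_iff_of_le fun j _ => hab j).1
    (le_antisymm (sum_le_sum fun j _ => hab j) h) j (mem_univ j)

lemma sum_rowOfSum (h₁ : ∑ j, a j ≤ c) (h₂ : c ≤ ∑ j, b j) : ∑ j, rowOfSum a b c j = c := by
  simp only [rowOfSum, sum_add_distrib, ← mul_sum, sum_sub_distrib]
  rcases eq_or_ne (∑ j, b j - ∑ j, a j) 0 with h | h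
  · rw [h, mul_zero]
    linarith
  · rw [div_mul_cancel₀ _ h]
    ring

lemma le_rowOfSum (hab : a ≤ b) (hc : ∑ j, a j ≤ c) : a ≤ rowOfSum a b c := fun j => by
  have hθ : 0 ≤ (c - ∑ k, a k) / (∑ k, b k - ∑ k, a k) :=
    div_nonneg (by linarith) (by linarith [sum_le_sum fun j (_ : j ∈ univ) => hab j])
  unfold rowOfSum
  nlinarith [hab j]

lemma rowOfSum_le (hab : a ≤ b) (hc : c ≤ ∑ j, b j) : rowOfSum a b c ≤ b := fun j => by
  have hθ : (c - ∑ k, a k) / (∑ k, b k - ∑ k, a k) ≤ 1 :=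
    div_le_one_of_le₀ (by linarith) (by linarith [sum_le_sum fun j (_ : j ∈ univ) => hab j])
  unfold rowOfSum
  nlinarith [hab j]

lemma rowOfSum_mono (hab : a ≤ b) : Monotone (rowOfSum a b) := fun c c' h j => by
  have hd : 0 ≤ ∑ k, b k - ∑ k, a k := by linarith [sum_le_sum fun j (_ : j ∈ univ) => hab j]
  have hj : 0 ≤ b j - a j := sub_nonneg.2 (hab j)
  simp only [rowOfSum]
  gcongr

lemma rowOfSum_sum_left : rowOfSum a b (∑ j, a j) = a := by
  funext j
  simp [rowOfSum]

lemma rowOfSum_sum_right (hab : a ≤ b) : rowOfSum a b (∑ j, b j) = b := by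
  rcases eq_or_ne (∑ j, b j - ∑ j, a j) 0 with h | h
  · obtain rfl := eq_of_le_of_sum_le hab (by linarith)
    funext j
    simp [rowOfSum]
  · funext j
    simp [rowOfSum, div_self h]

end RowOfSum

lemma IsGTPattern.monotone {m n : ℕ} {x : Fin (m + 1) → Fin n → ℝ} (hx : IsGTPattern m n x) :
    Monotone x :=
  Fin.monotone_iff_le_succ.2 fun i j => hx.1 i j

lemma rowOfSum_eq_of_sum_eq {m n : ℕ} {x : Fin (m + 1) → Fin n → ℝ} (hx : Monotone x)
    {s : Fin m} {i : Fin (m + 1)} {c : ℝ} (h₁ : ∑ j, x s.castSucc j ≤ c)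
    (h₂ : c ≤ ∑ j, x s.succ j) (hc : c = ∑ j, x i j) :
    rowOfSum (x s.castSucc) (x s.succ) c = x i := by
  have hsum {i i' : Fin (m + 1)} (h : i ≤ i') : ∑ j, x i j ≤ ∑ j, x i' j :=
    sum_le_sum fun j _ => hx h j
  -- `c` is the sum of an end row of the segment, which then equals `x i`
  rcases le_or_gt i s.castSucc with h | h
  · have hc' : c = ∑ j, x s.castSucc j := le_antisymm (hc ▸ hsum h) h₁
    rw [hc', rowOfSum_sum_left]
    exact (eq_of_le_of_sum_le (hx h) (hc ▸ hc' ▸ le_rfl)).symm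
  · have h' : s.succ ≤ i := Fin.castSucc_lt_iff_succ_le.1 h
    have hc' : c = ∑ j, x s.succ j := le_antisymm h₂ (hc ▸ hsum h')
    rw [hc', rowOfSum_sum_right (hx (Fin.castSucc_le_succ s))]
    exact eq_of_le_of_sum_le (hx h') (hc ▸ hc' ▸ le_rfl)

section WeightBelow

variable {k m' : ℕ} (v : Fin m' → ℤ) (f : Fin m' → Fin k)

def weightBelow (i : Fin (k + 1)) : ℝ :=
  ∑ t ∈ univ.filter (fun t => (f t).castSucc < i), (v t : ℝ)

lemma weightBelow_zero : weightBelow v f 0 = 0 := by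
  simp [weightBelow]

lemma weightBelow_last : weightBelow v f (Fin.last k) = ∑ t, (v t : ℝ) := by
  simp [weightBelow, Fin.castSucc_lt_last]

lemma weightBelow_succ (s : Fin k) :
    weightBelow v f s.succ =
      weightBelow v f s.castSucc + ∑ t ∈ univ.filter (fun t => f t = s), (v t : ℝ) := by
  rw [weightBelow, weightBelow, ← sum_union (disjoint_filter.2 fun t _ h h' => by simp [h'] at h)]
  congr 1
  ext t
  simp [Fin.castSucc_lt_succ_iff, le_iff_lt_or_eq]

lemma weightBelow_id_succ (s : Fin m') :
    weightBelow v id s.succ = weightBelow v id s.castSucc + v s := by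
  simp [weightBelow_succ, filter_eq']

variable {v f}

lemma weightBelow_le_weightBelow (hv : ∀ t, 0 ≤ v t) {k' : ℕ} {f' : Fin m' → Fin k'}
    {i : Fin (k + 1)} {i' : Fin (k' + 1)} (h : ∀ t, (f t).castSucc < i → (f' t).castSucc < i') :
    weightBelow v f i ≤ weightBelow v f' i' :=
  sum_le_sum_of_subset_of_nonneg (fun t ht => by simpa using h t (by simpa using ht))
    fun t _ _ => by exact_mod_cast hv t

end WeightBelow

lemma sum_row_eq_add_weightBelow {m m' n : ℕ} {x : Fin (m + 1) → Fin n → ℝ} {w : Fin m → ℤ}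
    {w' : Fin m' → ℤ} {g : Fin m' → Fin m}
    (hxw : ∀ i : Fin m, (∑ j, x i.succ j) - (∑ j, x i.castSucc j) = (w i : ℝ))
    (hgw : ∀ s, w s = ∑ t ∈ univ.filter (fun t => g t = s), w' t) (i : Fin (m + 1)) :
    ∑ j, x i j = ∑ j, x 0 j + weightBelow w' g i := by
  induction i using Fin.induction with
  | zero => simp [weightBelow_zero]
  | succ s ih =>
    have hs := hxw s
    rw [hgw s, Int.cast_sum] at hs
    rw [weightBelow_succ]
    linarith

section RefinedPattern

variable {m m' n : ℕ} {x : Fin (m + 1) → Fin n → ℝ} {g : Fin m' → Fin m} {w' : Fin m' → ℤ}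

noncomputable def refinedPattern (x : Fin (m + 1) → Fin n → ℝ) (g : Fin m' → Fin m)
    (w' : Fin m' → ℤ) : Fin (m' + 1) → Fin n → ℝ :=
  Fin.snoc (α := fun _ => Fin n → ℝ)
    (fun t => rowOfSum (x (g t).castSucc) (x (g t).succ) (∑ j, x 0 j + weightBelow w' id t.castSucc))
    (x (Fin.last m))

lemma refinedPattern_castSucc (t : Fin m') :
    refinedPattern x g w' t.castSucc =
      rowOfSum (x (g t).castSucc) (x (g t).succ) (∑ j, x 0 j + weightBelow w' id t.castSucc) := by
  simp [refinedPattern]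

lemma refinedPattern_last : refinedPattern x g w' (Fin.last m') = x (Fin.last m) := by
  simp [refinedPattern]

lemma level_mem_block (hg : Monotone g) (hw' : ∀ t, 0 ≤ w' t)
    (hσ : ∀ i, ∑ j, x i j = ∑ j, x 0 j + weightBelow w' g i) (t : Fin m') :
    ∑ j, x (g t).castSucc j ≤ ∑ j, x 0 j + weightBelow w' id t.castSucc ∧
    ∑ j, x 0 j + weightBelow w' id t.castSucc ≤ ∑ j, x 0 j + weightBelow w' id t.succ ∧
    ∑ j, x 0 j + weightBelow w' id t.succ ≤ ∑ j, x (g t).succ j := by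
  rw [hσ, hσ (g t).succ]
  refine ⟨?_, ?_, ?_⟩ <;> gcongr 1 <;> refine weightBelow_le_weightBelow hw' fun t' h => ?_
  · simp only [Fin.castSucc_lt_castSucc_iff, id] at h ⊢
    exact hg.reflect_lt h
  · exact h.trans (Fin.castSucc_lt_succ)
  · simp only [Fin.castSucc_lt_succ_iff, id] at h ⊢
    exact hg h

lemma refinedPattern_succ (hx : Monotone x) (hg : Monotone g) (hw' : ∀ t, 0 ≤ w' t)
    (hσ : ∀ i, ∑ j, x i j = ∑ j, x 0 j + weightBelow w' g i) (t : Fin m') :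
    refinedPattern x g w' t.succ =
      rowOfSum (x (g t).castSucc) (x (g t).succ) (∑ j, x 0 j + weightBelow w' id t.succ) := by
  obtain ⟨hlo, hmid, hhi⟩ := level_mem_block hg hw' hσ t
  rcases Fin.eq_castSucc_or_eq_last t.succ with ⟨t₁, ht₁⟩ | ht
  · obtain ⟨hlo₁, hmid₁, hhi₁⟩ := level_mem_block hg hw' hσ t₁
    rw [ht₁] at hmid hhi ⊢
    rw [refinedPattern_castSucc]
    have htt₁ : t ≤ t₁ := Fin.castSucc_le_castSucc_iff.1 (ht₁ ▸ Fin.castSucc_le_succ t)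
    rcases (hg htt₁).eq_or_lt with h | h
    · rw [h]
    -- the level sits at the top of block `g t` and the bottom of block `g t₁`
    have hc : ∑ j, x 0 j + weightBelow w' id t₁.castSucc = ∑ j, x (g t₁).castSucc j :=
      le_antisymm (hhi.trans (sum_le_sum fun j _ => hx (Fin.castSucc_lt_iff_succ_le.1
        (Fin.castSucc_lt_castSucc_iff.2 h)) j)) hlo₁
    rw [rowOfSum_eq_of_sum_eq hx hlo₁ (hmid₁.trans hhi₁) hc,
      rowOfSum_eq_of_sum_eq hx (hlo.trans hmid) hhi hc]
  · rw [ht] at hmid hhi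
    rw [ht, refinedPattern_last]
    refine (rowOfSum_eq_of_sum_eq hx (hlo.trans hmid) hhi ?_).symm
    rw [hσ (Fin.last m), weightBelow_last, weightBelow_last]

lemma refinedPattern_mem_gtPolytope {lam mu : Fin n → ℤ} {w : Fin m → ℤ} (hm' : 0 < m')
    (hg : Monotone g) (hw' : ∀ t, 0 ≤ w' t)
    (hgw : ∀ s, w s = ∑ t ∈ univ.filter (fun t => g t = s), w' t)
    (hx : x ∈ gtPolytope m n lam mu w) :
    refinedPattern x g w' ∈ gtPolytope m' n lam mu w' := by
  obtain ⟨hgt, hx0, hxl, hxw⟩ := hx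
  have hmono := hgt.monotone
  have hσ := sum_row_eq_add_weightBelow hxw hgw
  have hblock := level_mem_block hg hw' hσ
  have hseg (t : Fin m') : x (g t).castSucc ≤ x (g t).succ := hmono (Fin.castSucc_le_succ _)
  refine ⟨⟨fun t j => ?_, fun t j hj => ?_⟩, fun j => ?_, fun j => ?_, fun t => ?_⟩
  · rw [refinedPattern_castSucc, refinedPattern_succ hmono hg hw' hσ]
    exact rowOfSum_mono (hseg t) (hblock t).2.1 j
  -- both rows lie between the interlacing rows `g t` and `g t + 1` of `x`
  · rw [refinedPattern_castSucc, refinedPattern_succ hmono hg hw' hσ]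
    calc _ ≤ x (g t).succ ⟨j + 1, hj⟩ := rowOfSum_le (hseg t) (hblock t).2.2 _
      _ ≤ x (g t).castSucc j := hgt.2 (g t) j hj
      _ ≤ _ := le_rowOfSum (hseg t) (hblock t).1 j
  · have h0 : (0 : Fin (m' + 1)) = (⟨0, hm'⟩ : Fin m').castSucc := rfl
    have hc : ∑ j, x 0 j + weightBelow w' id (0 : Fin (m' + 1)) = ∑ j, x 0 j := by
      rw [weightBelow_zero, add_zero]
    rw [h0, refinedPattern_castSucc, ← h0, rowOfSum_eq_of_sum_eq hmono ?_ ?_ hc, hx0]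
    · exact (hblock ⟨0, hm'⟩).1
    · exact (hblock ⟨0, hm'⟩).2.1.trans (hblock ⟨0, hm'⟩).2.2
  · rw [refinedPattern_last, hxl]
  · rw [refinedPattern_succ hmono hg hw' hσ, refinedPattern_castSucc,
      sum_rowOfSum ((hblock t).1.trans (hblock t).2.1) (hblock t).2.2,
      sum_rowOfSum (hblock t).1 ((hblock t).2.1.trans (hblock t).2.2), weightBelow_id_succ]
    ring

end RefinedPattern

theorem statement7_general (n : ℕ) (lam mu : Fin n → ℤ)
    (m m' : ℕ) (w : Fin m → ℤ) (w' : Fin m' → ℤ)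
    (hw' : ∀ i, 0 ≤ w' i)
    (href : Refines w w')
    (hne : (gtPolytope m n lam mu w).Nonempty) :
    (gtPolytope m' n lam mu w').Nonempty := by
  obtain ⟨g, hg, hgs, hgw⟩ := href
  obtain ⟨x, hx⟩ := hne
  rcases Nat.eq_zero_or_pos m' with rfl | hm'
  · obtain rfl : m = 0 := by simpa using Fintype.card_le_of_surjective g hgs
    obtain rfl : w = w' := Subsingleton.elim _ _
    exact ⟨x, hx⟩
  · exact ⟨_, refinedPattern_mem_gtPolytope hm' hg hw' hgw hx⟩

/-- If `w'` refines `w` and `P_{λ/μ,w}` is nonempty, then `P_{λ/μ,w'}` is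
nonempty. -/
theorem statement7 (n : ℕ) (hn : 1 ≤ n) (lam mu : Fin n → ℤ)
    (hlam : Antitone lam) (hmu : Antitone mu)
    (hmu0 : ∀ j, 0 ≤ mu j) (hge : ∀ j, mu j ≤ lam j)
    (m m' : ℕ) (w : Fin m → ℤ) (w' : Fin m' → ℤ)
    (hw : ∀ i, 0 ≤ w i) (hw' : ∀ i, 0 ≤ w' i)
    (hsum : ∑ i, w i = ∑ j, lam j - ∑ j, mu j)
    (hsum' : ∑ i, w' i = ∑ j, lam j - ∑ j, mu j)
    (href : Refines w w')
    (hne : (gtPolytope m n lam mu w).Nonempty) :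
    (gtPolytope m' n lam mu w').Nonempty :=
  statement7_general n lam mu m m' w w' hw' href hne
end

section
/- Let λ/μ be a skew shape with n parts and ν/τ a skew shape with l parts (λ,μ,ν,τ weakly decreasing nonnegative integer vectors with λ ≥ μ and ν ≥ τ componentwise). Define the disjoint union (λ/μ) ∪ (ν/τ) as the skew shape (ν_1+λ_1,…,ν_1+λ_n, ν_1,…,ν_l)/(ν_1+μ_1,…,ν_1+μ_n, τ_1,…,τ_l), and similarly (ν/τ) ∪ (λ/μ) = (λ_1+ν_1,…,λ_1+ν_l, λ_1,…,λ_n)/(λ_1+τ_1,…,λ_1+τ_l, μ_1,…,μ_n). Then for every nonnegative integer weight vector w of total sum (|λ|−|μ|)+(|ν|−|τ|), the polytope P_{(λ/μ)∪(ν/τ),w} is integral if and only if P_{(ν/τ)∪(λ/μ),w} is integral. -/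
open Finset

/-- A GT-polytope is integral if all of its extreme points have integer
entries. -/
def IsIntegralPolytope {m n : ℕ} (P : Set (Fin (m + 1) → Fin n → ℝ)) : Prop :=
  ∀ x ∈ Set.extremePoints ℝ P, ∀ i j, ∃ z : ℤ, x i j = (z : ℝ)

/-!
Swapping the two blocks of columns of a pattern, shifting the block moved to the front by
`λ₁` and the block moved to the back by `-ν₁`, is an affine bijection between the two
polytopes that preserves integrality of entries, and affine bijections carry extreme points
to extreme points. Every GT inequality of the swapped pattern is inherited from the original
one, except the diagonal crossing from the `ν/τ` block into the `λ/μ` block; that one holds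
because every entry of the first `λ/μ` column is at most `λ₁ + ν₁` and every entry of the
`ν/τ` block is at least its `τ`-entry, hence nonnegative.
-/

theorem AffineEquiv.image_extremePoints {𝕜 E F : Type*} [Ring 𝕜] [PartialOrder 𝕜]
    [IsOrderedRing 𝕜] [AddCommGroup E] [Module 𝕜 E] [AddCommGroup F] [Module 𝕜 F]
    (f : E ≃ᵃ[𝕜] F) (s : Set E) :
    f '' Set.extremePoints 𝕜 s = Set.extremePoints 𝕜 (f '' s) := by
  ext b
  obtain ⟨a, rfl⟩ := f.surjective b
  have := image_openSegment 𝕜 f.toAffineMap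
  simp only [AffineEquiv.coe_toAffineMap] at this
  simp only [mem_extremePoints, f.surjective.forall, f.injective.mem_set_image,
    f.injective.eq_iff, ← this]

theorem IsGTPattern.monotone_column {m n : ℕ} {x : Fin (m + 1) → Fin n → ℝ}
    (hx : IsGTPattern m n x) (j : Fin n) : Monotone (x · j) :=
  Fin.monotone_iff_le_succ.2 fun i => hx.1 i j

theorem isGTPattern_iff {m n : ℕ} {x : Fin (m + 1) → Fin n → ℝ} :
    IsGTPattern m n x ↔ (∀ (i : Fin m) (j : Fin n), x i.castSucc j ≤ x i.succ j) ∧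
      ∀ (i : Fin m) (j j' : Fin n), (j' : ℕ) = j + 1 → x i.succ j' ≤ x i.castSucc j := by
  refine and_congr_right fun _ => ⟨fun h i j j' hj => ?_, fun h i j hj => h i j _ rfl⟩
  obtain ⟨j', hj'⟩ := j'
  subst hj
  exact h i j hj'

def blockSwap (ι : Type*) (n l : ℕ) (a b : ℝ) :
    (ι → Fin (n + l) → ℝ) ≃ᵃ[ℝ] (ι → Fin (l + n) → ℝ) :=
  (LinearEquiv.piCongrRight fun _ => LinearEquiv.funCongrLeft ℝ ℝ finAddFlip).toAffineEquiv.trans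
    (AffineEquiv.constVAdd ℝ _ fun _ => Fin.append (fun _ => a) fun _ => -b)

section BlockSwap

variable {ι : Type*} {n l : ℕ}

@[simp]
theorem blockSwap_castAdd (a b : ℝ) (x : ι → Fin (n + l) → ℝ) (i : ι) (k : Fin l) :
    blockSwap ι n l a b x i (Fin.castAdd n k) = x i (Fin.natAdd n k) + a := by
  simp [blockSwap, add_comm]

@[simp]
theorem blockSwap_natAdd (a b : ℝ) (x : ι → Fin (n + l) → ℝ) (i : ι) (k : Fin n) :
    blockSwap ι n l a b x i (Fin.natAdd l k) = x i (Fin.castAdd l k) - b := by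
  simp [blockSwap, sub_eq_neg_add]

theorem blockSwap_blockSwap (a b : ℝ) (x : ι → Fin (n + l) → ℝ) :
    blockSwap ι l n b a (blockSwap ι n l a b x) = x := by
  ext i j
  induction j using Fin.addCases <;> simp

theorem sum_blockSwap (a b : ℝ) (x : ι → Fin (n + l) → ℝ) (i : ι) :
    ∑ j, blockSwap ι n l a b x i j = ∑ j, x i j + (l * a - n * b) := by
  simp only [Fin.sum_univ_add, blockSwap_castAdd, blockSwap_natAdd, sum_add_distrib,
    sum_sub_distrib, sum_const, card_univ, Fintype.card_fin, nsmul_eq_mul]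
  ring

theorem blockSwap_intCast {a b : ℤ} {x : ι → Fin (n + l) → ℝ}
    (hx : ∀ i j, ∃ z : ℤ, x i j = z) (i : ι) (j : Fin (l + n)) :
    ∃ z : ℤ, blockSwap ι n l a b x i j = z := by
  induction j using Fin.addCases with
  | left k =>
    obtain ⟨z, hz⟩ := hx i (Fin.natAdd n k)
    exact ⟨z + a, by simp [hz]⟩
  | right k =>
    obtain ⟨z, hz⟩ := hx i (Fin.castAdd l k)
    exact ⟨z - b, by simp [hz]⟩

end BlockSwap

theorem IsGTPattern.blockSwap {m n l : ℕ} {x : Fin (m + 1) → Fin (n + l) → ℝ}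
    (hx : IsGTPattern m (n + l) x) (a b : ℝ) (hn : 0 < n)
    (htop : x (Fin.last m) (Fin.castAdd l ⟨0, hn⟩) ≤ a + b)
    (hbot : ∀ k, 0 ≤ x 0 (Fin.natAdd n k)) :
    IsGTPattern m (l + n) (blockSwap _ n l a b x) := by
  have hmono := hx.monotone_column
  rw [isGTPattern_iff] at hx ⊢
  obtain ⟨hcol, hdiag⟩ := hx
  refine ⟨fun i j => ?_, fun i j j' hj => ?_⟩
  · induction j using Fin.addCases <;> simp [hcol]
  induction j using Fin.addCases with
  | left k =>
    induction j' using Fin.addCases with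
    | left k' => simpa using hdiag i _ _ (by simp at hj ⊢; omega)
    | right k' =>
      obtain rfl : k' = ⟨0, hn⟩ := Fin.ext (by simp at hj ⊢; omega)
      have := hmono (Fin.castAdd l ⟨0, hn⟩) (Fin.le_last i.succ)
      have := hmono (Fin.natAdd n k) (Fin.zero_le i.castSucc)
      simp only [blockSwap_castAdd, blockSwap_natAdd]
      linarith [hbot k]
  | right k =>
    induction j' using Fin.addCases with
    | left k' => simp at hj; omega
    | right k' => simpa using hdiag i _ _ (by simp at hj ⊢; omega)

/-- The GT polytope of the skew shape `(λ/μ) ∪ (ν/τ)`. -/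
def gtPolytopeUnion (m : ℕ) {n l : ℕ} (lam mu : Fin n → ℤ) (nu tau : Fin l → ℤ) (hl : 1 ≤ l)
    (w : Fin m → ℤ) : Set (Fin (m + 1) → Fin (n + l) → ℝ) :=
  gtPolytope m (n + l) (Fin.append (fun i => nu ⟨0, hl⟩ + lam i) nu)
    (Fin.append (fun i => nu ⟨0, hl⟩ + mu i) tau) w

section Union

variable {m n l : ℕ} {lam mu : Fin n → ℤ} {nu tau : Fin l → ℤ} {w : Fin m → ℤ}

theorem blockSwap_mem_gtPolytopeUnion (hn : 1 ≤ n) (hl : 1 ≤ l) (htau0 : ∀ j, 0 ≤ tau j)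
    {x : Fin (m + 1) → Fin (n + l) → ℝ} (hx : x ∈ gtPolytopeUnion m lam mu nu tau hl w) :
    blockSwap _ n l (lam ⟨0, hn⟩) (nu ⟨0, hl⟩) x ∈ gtPolytopeUnion m nu tau lam mu hn w := by
  obtain ⟨hgt, hbot, htop, hwt⟩ := hx
  refine ⟨hgt.blockSwap _ _ hn ?_ fun k => ?_, fun j => ?_, fun j => ?_, fun i => ?_⟩
  · rw [htop, Fin.append_left]
    push_cast
    linarith
  · simp [hbot, htau0]
  · induction j using Fin.addCases <;> simp [hbot, add_comm]
  · induction j using Fin.addCases <;> simp [htop, add_comm]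
  · rw [sum_blockSwap, sum_blockSwap, ← hwt i]
    ring

theorem image_blockSwap_gtPolytopeUnion (hn : 1 ≤ n) (hl : 1 ≤ l) (hmu0 : ∀ j, 0 ≤ mu j)
    (htau0 : ∀ j, 0 ≤ tau j) :
    blockSwap _ n l (lam ⟨0, hn⟩) (nu ⟨0, hl⟩) '' gtPolytopeUnion m lam mu nu tau hl w =
      gtPolytopeUnion m nu tau lam mu hn w :=
  (Set.image_subset_iff.2 fun _ => blockSwap_mem_gtPolytopeUnion hn hl htau0).antisymm
    fun y hy => ⟨_, blockSwap_mem_gtPolytopeUnion hl hn hmu0 hy, blockSwap_blockSwap _ _ y⟩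

theorem isIntegralPolytope_gtPolytopeUnion_of_swap (hn : 1 ≤ n) (hl : 1 ≤ l)
    (hmu0 : ∀ j, 0 ≤ mu j) (htau0 : ∀ j, 0 ≤ tau j)
    (h : IsIntegralPolytope (gtPolytopeUnion m nu tau lam mu hn w)) :
    IsIntegralPolytope (gtPolytopeUnion m lam mu nu tau hl w) := by
  intro x hx
  have hx' : blockSwap _ n l (lam ⟨0, hn⟩) (nu ⟨0, hl⟩) x ∈
      Set.extremePoints ℝ (gtPolytopeUnion m nu tau lam mu hn w) := by
    rw [← image_blockSwap_gtPolytopeUnion hn hl hmu0 htau0, ← AffineEquiv.image_extremePoints]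
    exact ⟨x, hx, rfl⟩
  rw [← blockSwap_blockSwap (lam ⟨0, hn⟩ : ℝ) (nu ⟨0, hl⟩ : ℝ) x]
  exact blockSwap_intCast (h _ hx')

end Union

theorem statement9_general (n l : ℕ) (hn : 1 ≤ n) (hl : 1 ≤ l)
    (lam mu : Fin n → ℤ) (nu tau : Fin l → ℤ)
    (hmu0 : ∀ j, 0 ≤ mu j) (htau0 : ∀ j, 0 ≤ tau j)
    (m : ℕ) (w : Fin m → ℤ) :
    IsIntegralPolytope (gtPolytope m (n + l)
        (Fin.append (fun i => nu ⟨0, hl⟩ + lam i) nu)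
        (Fin.append (fun i => nu ⟨0, hl⟩ + mu i) tau) w) ↔
    IsIntegralPolytope (gtPolytope m (l + n)
        (Fin.append (fun i => lam ⟨0, hn⟩ + nu i) lam)
        (Fin.append (fun i => lam ⟨0, hn⟩ + tau i) mu) w) :=
  ⟨isIntegralPolytope_gtPolytopeUnion_of_swap hl hn htau0 hmu0,
    isIntegralPolytope_gtPolytopeUnion_of_swap hn hl hmu0 htau0⟩

/-- The GT-polytope of the disjoint union `(λ/μ) ∪ (ν/τ)` is integral if and
only if that of `(ν/τ) ∪ (λ/μ)` is integral, for every weight `w`. -/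
theorem statement9 (n l : ℕ) (hn : 1 ≤ n) (hl : 1 ≤ l)
    (lam mu : Fin n → ℤ) (nu tau : Fin l → ℤ)
    (hlam : Antitone lam) (hmu : Antitone mu) (hnu : Antitone nu) (htau : Antitone tau)
    (hmu0 : ∀ j, 0 ≤ mu j) (htau0 : ∀ j, 0 ≤ tau j)
    (hge1 : ∀ j, mu j ≤ lam j) (hge2 : ∀ j, tau j ≤ nu j)
    (m : ℕ) (w : Fin m → ℤ) (hw : ∀ i, 0 ≤ w i)
    (hsum : ∑ i, w i =
      (∑ j, lam j - ∑ j, mu j) + (∑ j, nu j - ∑ j, tau j)) :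
    IsIntegralPolytope (gtPolytope m (n + l)
        (Fin.append (fun i => nu ⟨0, hl⟩ + lam i) nu)
        (Fin.append (fun i => nu ⟨0, hl⟩ + mu i) tau) w) ↔
    IsIntegralPolytope (gtPolytope m (l + n)
        (Fin.append (fun i => lam ⟨0, hn⟩ + nu i) lam)
        (Fin.append (fun i => lam ⟨0, hn⟩ + tau i) mu) w) :=
  statement9_general n l hn hl lam mu nu tau hmu0 htau0 m w
end
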